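/- Define w_1 = a, w_2 = b, w_3 = ba, w_4 = baabbaa, and w_n = b·TM_{2n-8}·complement(TM_{2n-6})·complement(TM_{2n-6})' for n ≥ 5. Then for every n ≥ 5, w_{n+1} = (baa)^{-1}·τ²(w_n)·baa, i.e., τ²(w_n) has baa as a prefix and removing that prefix and appending baa gives w_{n+1}. -/

import Mathlib

/-- Alphabet {a,b} with a = false, b = true, a < b. -/
abbrev Letter := Bool

/-- Lexicographic order (proper prefixes are smaller). -/
def lexlt (x y : List Bool) : Prop := List.Lex (· < ·) x y

/-- Fibonacci words: F 0 = b, F 1 = a, F (k+2) = F (k+1) ++ F k. -/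
def Fib : ℕ → List Bool
  | 0 => [true]
  | 1 => [false]
  | (k+2) => Fib (k+1) ++ Fib k

/-- bitwise complement -/
def comp (w : List Bool) : List Bool := w.map (fun c => !c)

/-- Thue-Morse words: TM 0 = a, TM (k+1) = TM k ++ comp (TM k). -/
def TM : ℕ → List Bool
  | 0 => [false]
  | (k+1) => TM k ++ comp (TM k)

/-- Fueled Nyldon predicate: a string of length 1 is Nyldon; a longer string is
Nyldon iff it admits no factorization into ≥ 2 Nyldon words in lexicographically
non-decreasing order. -/
def NyldonAux : ℕ → List Bool → Prop
  | 0, _ => False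
  | (n+1), w =>
    w.length = 1 ∨ (1 < w.length ∧
      ¬ ∃ fs : List (List Bool), 2 ≤ fs.length ∧ fs.flatten = w ∧
        fs.Chain' lexlt ∧ ∀ u ∈ fs, NyldonAux n u)

def Nyldon (w : List Bool) : Prop := NyldonAux w.length w

/-- H k = Fib k with its first letter removed. -/
def H (k : ℕ) : List Bool := (Fib k).tail

/-- s is the longest Nyldon proper suffix of w. -/
def IsLnps (w s : List Bool) : Prop :=
  s <:+ w ∧ s ≠ w ∧ Nyldon s ∧
    ∀ t : List Bool, t <:+ w → t ≠ w → Nyldon t → t.length ≤ s.length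

/-- Thue-Morse morphism: τ(a)=ab, τ(b)=ba. -/
def tau (w : List Bool) : List Bool :=
  w.flatMap (fun c => if c then [true, false] else [false, true])

/-- The sequence w_n: w_1=a, w_2=b, w_3=ba, w_4=baabbaa,
w_n = b·TM_{2n-8}·comp(TM_{2n-6})·comp(TM_{2n-6})' for n ≥ 5. -/
def wseq : ℕ → List Bool
  | 0 => []
  | 1 => [false]
  | 2 => [true]
  | 3 => [true, false]
  | 4 => [true, false, false, true, true, false, false]
  | (n+5) => true :: (TM (2*n+2) ++ comp (TM (2*n+4)) ++ (comp (TM (2*n+4))).dropLast)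

/-- The twelve words t_i(k). -/
def tword : ℕ → ℕ → List Bool
  | 1, k => true :: (TM (2*k+1)).dropLast
  | 2, k => true :: TM (2*k+1)
  | 3, k => true :: (TM (2*k+1) ++ (comp (TM (2*k))).dropLast)
  | 4, k => true :: TM (2*k)
  | 5, k => true :: (TM (2*k) ++ TM (2*k-1) ++ (comp (TM (2*k-2))).dropLast)
  | 6, k => true :: (TM (2*k) ++ (TM (2*k+1)).dropLast)
  | 7, k => true :: (TM (2*k) ++ TM (2*k+1))
  | 8, k => true :: (TM (2*k) ++ TM (2*k+1) ++ (comp (TM (2*k))).dropLast)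
  | 9, k => true :: (TM (2*k) ++ (comp (TM (2*k+2))).dropLast)
  | 10, k => true :: (TM (2*k) ++ comp (TM (2*k+2)))
  | 11, k => true :: (TM (2*k) ++ TM (2*k+1) ++ (comp (TM (2*k+2))).dropLast)
  | 12, k => true :: (TM (2*k) ++ comp (TM (2*k+2)) ++ (comp (TM (2*k+2))).dropLast)
  | _, _ => []

/-!
`τ²` sends `TM_k` to `TM_{k+2}` and commutes with complementation, so it maps the blocks
`b`, `TM_{2n-8}`, `C = comp TM_{2n-6}` of `w_n = b·TM_{2n-8}·C·C'` to `baab`, `TM_{2n-6}`,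
`comp TM_{2n-4}`. Thue-Morse words of even index end in `a`, so `C` ends in `b` and
`τ²(C') · baa = τ²(C)'`: moving the leading `baa` of `τ²(w_n)` to its end therefore turns
the trailing `τ²(C')` into `(comp TM_{2n-4})'`, which gives `w_{n+1}`.
-/

lemma comp_append (u v : List Bool) : comp (u ++ v) = comp u ++ comp v :=
  List.map_append

lemma comp_comp (w : List Bool) : comp (comp w) = w := by
  simp [comp, Function.comp_def]

lemma tau_append (u v : List Bool) : tau (u ++ v) = tau u ++ tau v :=
  List.flatMap_append

lemma tau_comp (w : List Bool) : tau (comp w) = comp (tau w) := by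
  induction w with
  | nil => rfl
  | cons c w ih => cases c <;> simp_all [tau, comp]

lemma tau_TM (k : ℕ) : tau (TM k) = TM (k + 1) := by
  induction k with
  | zero => rfl
  | succ k ih => rw [TM, tau_append, tau_comp, ih]; rfl

lemma TM_add_two (k : ℕ) : TM (k + 2) = TM k ++ comp (TM k) ++ comp (TM k) ++ TM k := by
  rw [TM, TM, comp_append, comp_comp]
  simp only [List.append_assoc]

lemma getLast?_TM_two_mul (k : ℕ) : (TM (2 * k)).getLast? = some false := by
  induction k with
  | zero => rfl
  | succ k ih => rw [Nat.mul_succ, TM_add_two, List.getLast?_append, ih]; rfl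

lemma getLast?_comp_TM_two_mul (k : ℕ) : (comp (TM (2 * k))).getLast? = some true := by
  rw [comp, List.getLast?_map, getLast?_TM_two_mul]; rfl

lemma tau_tau_dropLast_of_getLast?_eq_true {w : List Bool} (h : w.getLast? = some true) :
    tau (tau w.dropLast) ++ [true, false, false] = (tau (tau w)).dropLast := by
  obtain ⟨u, rfl⟩ := List.getLast?_eq_some_iff.mp h
  rw [List.dropLast_concat, tau_append, tau_append,
    show tau (tau [true]) = [true, false, false] ++ [true] from rfl, ← List.append_assoc,
    List.dropLast_concat]

theorem stmt15 : ∀ n : ℕ, 5 ≤ n →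
    [true, false, false] <+: tau (tau (wseq n)) ∧
    wseq (n+1) = (tau (tau (wseq n))).drop 3 ++ [true, false, false] := by
  intro n hn
  obtain ⟨m, rfl⟩ := Nat.exists_eq_add_of_le' hn
  set C := comp (TM (2 * m + 4))
  have hC : tau (tau C) = comp (TM (2 * m + 6)) := by
    rw [tau_comp, tau_comp, tau_TM, tau_TM]
  have hw : tau (tau (wseq (m + 5))) =
      [true, false, false] ++ true :: (TM (2 * m + 4) ++ comp (TM (2 * m + 6))
        ++ tau (tau C.dropLast)) := by
    change tau (tau ([true] ++ TM (2 * m + 2) ++ C ++ C.dropLast)) = _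
    simp only [tau_append, tau_TM, hC]
    rfl
  refine ⟨hw ▸ List.prefix_append _ _, ?_⟩
  have hlast : C.getLast? = some true := getLast?_comp_TM_two_mul (m + 2)
  rw [hw, List.drop_left' (by rfl : [true, false, false].length = 3)]
  simp only [List.cons_append, List.append_assoc]
  rw [tau_tau_dropLast_of_getLast?_eq_true hlast, hC, ← List.append_assoc]
  rfl
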